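/- arXiv:2101.11730 — 5 statements merged into one kernel-verified Lean document; each statement's English description precedes it below -/
import Mathlib

section
/- Soundness of the inductive assertion method: Given an automaton A with cutpoint set K and a valid annotation an for spec {P}{Q} (meaning an(init)=P, an(fin)=Q, and every verification condition along segments between cutpoints holds), then in any initial trace τ of A with τ₀ ⊨ P, at every position i with ctrl(τᵢ) ∈ K we have τᵢ ⊨ an(ctrl(τᵢ)). Consequently A ⊨ {P}{Q}. -/
/-- An automaton with control points `C` and data stores `S`. -/
structure Automaton (C S : Type) where
  init : C
  fin : C
  step : C × S → C × S → Prop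

namespace Automaton

variable {C S : Type}

/-- A trace: a nonempty list of states consecutive under the transition relation. -/
def IsTrace (A : Automaton C S) (τ : List (C × S)) : Prop :=
  τ ≠ [] ∧ List.Chain' A.step τ

/-- An initial trace starts at control point `init`. -/
def InitTrace (A : Automaton C S) (τ : List (C × S)) : Prop :=
  A.IsTrace τ ∧ ∃ s, τ.head? = some (A.init, s)

/-- Basic semantics of unary specs: every finite initial trace from a `P`-store
that ends at control `fin` ends in a `Q`-store. -/
def Sat (A : Automaton C S) (P Q : S → Prop) : Prop :=
  ∀ τ s₀ n sl, A.InitTrace τ → τ.head? = some (A.init, s₀) → P s₀ →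
    τ.getLast? = some (n, sl) → n = A.fin → Q sl

/-- Edge of the control-flow graph. -/
def Edge (A : Automaton C S) (n m : C) : Prop := ∃ s t, A.step (n, s) (m, t)

/-- A cutpoint set contains `init` and `fin` and cuts every CFG cycle. -/
def IsCutset (A : Automaton C S) (K : Set C) : Prop :=
  A.init ∈ K ∧ A.fin ∈ K ∧
  ∀ vs : List C, List.Chain' A.Edge vs → 1 < vs.length →
    vs.head? = vs.getLast? → ∃ v ∈ vs, v ∈ K

/-- A segment: a CFG path of length > 1 with endpoints in `K` and no
intermediate cutpoints. -/
def IsSeg (A : Automaton C S) (K : Set C) (vs : List C) : Prop :=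
  List.Chain' A.Edge vs ∧ 1 < vs.length ∧
  (∃ h, vs.head? = some h ∧ h ∈ K) ∧
  (∃ l, vs.getLast? = some l ∧ l ∈ K) ∧
  ∀ i (hi : i < vs.length), 0 < i → i + 1 < vs.length → vs.get ⟨i, hi⟩ ∉ K

/-- The control path of a trace. -/
def cpath (τ : List (C × S)) : List C := τ.map Prod.fst

/-- Validity of an annotation: every verification condition along segments
between cutpoints holds. -/
def ValidAnno (A : Automaton C S) (K : Set C) (an : C → S → Prop) : Prop :=
  ∀ vs τ α ω s t, A.IsSeg K vs → A.IsTrace τ → cpath τ = vs →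
    τ.head? = some (α, s) → τ.getLast? = some (ω, t) → an α s → an ω t

end Automaton

/-!
The cutpoints met along a trace cut it into consecutive pieces, each of which runs along a
segment: it starts and ends at a cutpoint and meets none in between. The verification
condition of that segment carries the annotation from the start of the piece to its end, so
by induction along the trace every cutpoint visit satisfies its annotation, starting from
`an init = P`. Partial correctness follows by applying this to the last state, at `fin ∈ K`,
where `an fin = Q`.
-/

namespace Automaton

variable {C S : Type} {A : Automaton C S} {K : Set C}

theorem isChain_edge_cpath {τ : List (C × S)} (h : List.IsChain A.step τ) :
    List.IsChain A.Edge (cpath τ) :=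
  List.isChain_map_of_isChain Prod.fst (fun p q hpq => ⟨p.2, q.2, hpq⟩) h

theorem isSeg_cons_append_singleton {a b : C} {vs : List C}
    (hchain : List.IsChain A.Edge (a :: vs ++ [b])) (ha : a ∈ K) (hb : b ∈ K)
    (hvs : ∀ v ∈ vs, v ∉ K) : A.IsSeg K (a :: vs ++ [b]) := by
  refine ⟨hchain, by simp, ⟨a, rfl, ha⟩, ⟨b, List.getLast?_concat .., hb⟩, ?_⟩
  rintro (_ | k) hk hpos hlt
  · omega
  · simp only [List.length_append, List.length_cons, List.length_nil] at hlt
    apply hvs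
    simp [List.getElem_append_left (show k < vs.length by omega)]

theorem ValidAnno.annot_of_segment_trace {an : C → S → Prop} (hvalid : A.ValidAnno K an)
    {x y : C × S} {mid : List (C × S)} (hchain : List.IsChain A.step (x :: mid ++ [y]))
    (hx : x.1 ∈ K) (hy : y.1 ∈ K) (hmid : ∀ p ∈ mid, p.1 ∉ K) (hann : an x.1 x.2) :
    an y.1 y.2 := by
  have hseg : A.IsSeg K (cpath (x :: mid ++ [y])) := by
    have := isChain_edge_cpath hchain
    simp only [cpath, List.map_append, List.map_cons, List.map_nil] at this ⊢
    exact isSeg_cons_append_singleton this hx hy (by simpa using hmid)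
  exact hvalid _ _ _ _ _ _ hseg ⟨by simp, hchain⟩ rfl rfl (List.getLast?_concat ..) hann

-- `x` is the last cutpoint passed and `mid` the states of the still open segment after it.
theorem ValidAnno.annot_of_mem_of_isChain_append {an : C → S → Prop}
    (hvalid : A.ValidAnno K an) {x : C × S} {mid rest : List (C × S)}
    (hchain : List.IsChain A.step (x :: mid ++ rest)) (hx : x.1 ∈ K)
    (hmid : ∀ p ∈ mid, p.1 ∉ K) (hann : an x.1 x.2) :
    ∀ p ∈ rest, p.1 ∈ K → an p.1 p.2 := by
  induction rest generalizing x mid with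
  | nil => simp
  | cons y rest ih =>
    by_cases hy : y.1 ∈ K
    · have hy_ann : an y.1 y.2 :=
        hvalid.annot_of_segment_trace (hchain.prefix ⟨rest, by simp⟩) hx hy hmid hann
      have hrest := ih (mid := []) (hchain.suffix ⟨x :: mid, by simp⟩) hy (by simp) hy_ann
      rintro p (_ | ⟨_, hp⟩) hpK
      exacts [hy_ann, hrest p hp hpK]
    · have hrest := ih (mid := mid ++ [y]) (by simpa using hchain) hx
        (fun p hp => (List.mem_append.mp hp).elim (hmid p)
          (fun hpy => List.eq_of_mem_singleton hpy ▸ hy)) hann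
      rintro p (_ | ⟨_, hp⟩) hpK
      exacts [absurd hpK hy, hrest p hp hpK]

theorem ValidAnno.annot_of_mem_of_isChain {an : C → S → Prop}
    (hvalid : A.ValidAnno K an) {τ : List (C × S)} (hchain : List.IsChain A.step τ)
    {α : C} {s : S} (hhead : τ.head? = some (α, s)) (hα : α ∈ K) (hann : an α s) :
    ∀ p ∈ τ, p.1 ∈ K → an p.1 p.2 := by
  obtain ⟨rest, rfl⟩ := List.head?_eq_some_iff.mp hhead
  rintro p (_ | ⟨_, hp⟩) hpK
  exacts [hann,
    hvalid.annot_of_mem_of_isChain_append (mid := []) hchain hα (by simp) hann p hp hpK]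

end Automaton

open Automaton

theorem iam_soundness_general {C S : Type}
    (A : Automaton C S) (K : Set C) (P Q : S → Prop) (an : C → S → Prop)
    (hK : A.IsCutset K)
    (hP : an A.init = P) (hQ : an A.fin = Q)
    (hvalid : A.ValidAnno K an) :
    (∀ τ s₀, A.InitTrace τ → τ.head? = some (A.init, s₀) → P s₀ →
      ∀ i (hi : i < τ.length), (τ.get ⟨i, hi⟩).1 ∈ K →
        an (τ.get ⟨i, hi⟩).1 (τ.get ⟨i, hi⟩).2) ∧
    A.Sat P Q := by
  have hcut : ∀ τ s₀, A.InitTrace τ → τ.head? = some (A.init, s₀) → P s₀ →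
      ∀ p ∈ τ, p.1 ∈ K → an p.1 p.2 := fun τ s₀ hτ hhead hp =>
    hvalid.annot_of_mem_of_isChain hτ.1.2 hhead hK.1 (hP ▸ hp)
  refine ⟨fun τ s₀ hτ hhead hp i hi => hcut τ s₀ hτ hhead hp _ (List.get_mem _ _), ?_⟩
  rintro τ s₀ n sl hτ hhead hp hlast rfl
  exact hQ ▸ hcut τ s₀ hτ hhead hp _ (List.mem_of_getLast? hlast) hK.2.1

/-- **Soundness of the inductive assertion method.** -/
theorem iam_soundness {C S : Type} [Finite C]
    (A : Automaton C S) (K : Set C) (P Q : S → Prop) (an : C → S → Prop)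
    (hne : A.init ≠ A.fin)
    (hfinality : ∀ p q, A.step p q → p.1 ≠ A.fin)
    (hnonstutter : ∀ p q, A.step p q → p.1 ≠ q.1)
    (hK : A.IsCutset K)
    (hP : an A.init = P) (hQ : an A.fin = Q)
    (hvalid : A.ValidAnno K an) :
    (∀ τ s₀, A.InitTrace τ → τ.head? = some (A.init, s₀) → P s₀ →
      ∀ i (hi : i < τ.length), (τ.get ⟨i, hi⟩).1 ∈ K →
        an (τ.get ⟨i, hi⟩).1 (τ.get ⟨i, hi⟩).2) ∧
    A.Sat P Q :=
  iam_soundness_general A K P Q an hK hP hQ hvalid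
end

section
/- Substitution commutes with the paired-store encoding: for a relation R on Var-stores, variables x, x' and expressions e, e', the encoding of the relational substitution R[x|x' ↦ e|e'] equals the simultaneous unary substitution (R⊕)[x ↦ e][ẋ' ↦ ė'], where ⊕ encodes a pair of Var-stores as one store on Var ∪ V̇ar and dotting renames variables. -/
section

variable {V : Type} [DecidableEq V]

/-- Encoding of a pair of `V`-stores as a single store on `V ⊕ V`
(`Sum.inl` for the original variables, `Sum.inr` for the dotted copies):
`s + t = Sum.elim s t`. -/
def encPair (s t : V → Int) : V ⊕ V → Int := Sum.elim s t

/-- `R⊕`: the encoding of a store relation as a predicate on combined stores. -/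
def enc (R : (V → Int) → (V → Int) → Prop) : (V ⊕ V → Int) → Prop :=
  fun u => ∃ s t, R s t ∧ u = encPair s t

/-- Relational semantic substitution `R[x|x' ↦ e|e']`. -/
def rsubst (R : (V → Int) → (V → Int) → Prop) (x x' : V)
    (e e' : (V → Int) → Int) : (V → Int) → (V → Int) → Prop :=
  fun s t => R (Function.update s x (e s)) (Function.update t x' (e' t))

/-- Unary semantic substitution `P[y ↦ f]` on combined stores. -/
def usubst (P : (V ⊕ V → Int) → Prop) (y : V ⊕ V) (f : (V ⊕ V → Int) → Int) :
    (V ⊕ V → Int) → Prop :=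
  fun u => P (Function.update u y (f u))

/-- The lift of an expression `e` to combined stores, reading the undotted
variables. -/
def liftL (e : (V → Int) → Int) : (V ⊕ V → Int) → Int :=
  fun u => e (fun x => u (Sum.inl x))

/-- The dotting of an expression `e'`: it reads the dotted variables. -/
def liftR (e' : (V → Int) → Int) : (V ⊕ V → Int) → Int :=
  fun u => e' (fun x => u (Sum.inr x))

lemma encPair_inj {V : Type} {s t s' t' : V → Int}
    (h : encPair s t = encPair s' t') : s = s' ∧ t = t' := by
  constructor
  · funext v; exact congrFun h (Sum.inl v)
  · funext v; exact congrFun h (Sum.inr v)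

/-- **Substitution commutes with the paired-store encoding**:
`(R[x|x' ↦ e|e'])⊕ = (R⊕)[x ↦ e][ẋ' ↦ ė']` (simultaneous substitution). -/
theorem enc_rsubst (R : (V → Int) → (V → Int) → Prop) (x x' : V)
    (e e' : (V → Int) → Int) :
    enc (rsubst R x x' e e') =
      usubst (usubst (enc R) (Sum.inl x) (liftL e)) (Sum.inr x') (liftR e') := by
  funext u
  apply propext
  have hsplit : u = encPair (fun v => u (Sum.inl v)) (fun v => u (Sum.inr v)) := by
    funext w; cases w <;> rfl
  have key : Function.update (Function.update u (Sum.inr x') (liftR e' u)) (Sum.inl x)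
      (liftL e (Function.update u (Sum.inr x') (liftR e' u))) =
      encPair (Function.update (fun v => u (Sum.inl v)) x (e (fun v => u (Sum.inl v))))
              (Function.update (fun v => u (Sum.inr v)) x' (e' (fun v => u (Sum.inr v)))) := by
    funext w
    cases w with
    | inl v =>
      by_cases hv : v = x <;>
        simp [Function.update, encPair, liftL, liftR, hv]
    | inr v =>
      by_cases hv : v = x' <;>
        simp [Function.update, encPair, liftL, liftR, hv]
  constructor
  · rintro ⟨s, t, hR, rfl⟩
    show enc R _
    rw [key]
    exact ⟨_, _, hR, rfl⟩
  · intro h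
    have h' : enc R _ := h
    rw [key] at h'
    obtain ⟨s, t, hR, heq⟩ := h'
    obtain ⟨hs, ht⟩ := encPair_inj heq.symm
    refine ⟨fun v => u (Sum.inl v), fun v => u (Sum.inr v), ?_, hsplit⟩
    subst hs; subst ht
    exact hR

end
end

section
/- Soundness of the lockstep (diagonal) relational rules: each rule of the lockstep RHL preserves relational validity. In particular: (dAss) x:=e | x':=e' : {R[x|x' ↦ e|e']}{R} is valid; (dSeq) if c|c' : {R}{Q} and d|d' : {Q}{S} are valid then c;d | c';d' : {R}{S} is valid; (dIf) if R implies agreement of tests e,e' on truth value and the two branch pairs are valid under the strengthened preconditions, then the conditionals satisfy {R}{S}; (dWh) if Q implies agreement of e,e' and c|c' : {Q ∧ ⟨e⟩ ∧ ⟨e'⟩'}{Q} is valid then while e do c | while e' do c' : {Q}{Q ∧ ¬⟨e⟩ ∧ ¬⟨e'⟩'} is valid; (rConseq) weakening/strengthening by relational implication preserves validity. -/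
/-- Commands over a type `V` of variables; expressions are represented
semantically as functions from stores to integers. -/
inductive Cmd (V : Type) : Type where
  | skip : Cmd V
  | assign (x : V) (e : (V → Int) → Int) : Cmd V
  | seq : Cmd V → Cmd V → Cmd V
  | choice : Cmd V → Cmd V → Cmd V
  | ite (e : (V → Int) → Int) : Cmd V → Cmd V → Cmd V
  | while (e : (V → Int) → Int) : Cmd V → Cmd V

namespace Cmd

variable {V W : Type}

/-- Small-step transition semantics. -/
inductive Step [DecidableEq V] : Cmd V × (V → Int) → Cmd V × (V → Int) → Prop where
  | iteT {e c d s} : e s ≠ 0 → Step (.ite e c d, s) (c, s)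
  | iteF {e c d s} : e s = 0 → Step (.ite e c d, s) (d, s)
  | whT {e c s} : e s ≠ 0 → Step (.while e c, s) (.seq c (.while e c), s)
  | whF {e c s} : e s = 0 → Step (.while e c, s) (.skip, s)
  | seqStep {c s d t b} : Step (c, s) (d, t) → Step (.seq c b, s) (.seq d b, t)
  | assign {x e s} : Step (.assign x e, s) (.skip, Function.update s x (e s))
  | seqSkip {c s} : Step (.seq .skip c, s) (c, s)
  | chL {c d s} : Step (.choice c d, s) (c, s)
  | chR {c d s} : Step (.choice c d, s) (d, s)

/-- Terminating execution: reflexive-transitive closure reaching `skip`. -/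
def Term [DecidableEq V] (c : Cmd V) (s t : V → Int) : Prop :=
  Relation.ReflTransGen Step (c, s) (Cmd.skip, t)

/-- Renaming of variables by `f`, with expressions composed accordingly. -/
def rename (f : V → W) : Cmd V → Cmd W
  | .skip => .skip
  | .assign x e => .assign (f x) (fun u => e (fun y => u (f y)))
  | .seq c d => .seq (rename f c) (rename f d)
  | .choice c d => .choice (rename f c) (rename f d)
  | .ite e c d => .ite (fun u => e (fun y => u (f y))) (rename f c) (rename f d)
  | .while e c => .while (fun u => e (fun y => u (f y))) (rename f c)

end Cmd

section Sem

variable {V : Type} [DecidableEq V]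

/-- Unary Hoare validity (partial correctness). -/
def HValid (c : Cmd V) (P Q : (V → Int) → Prop) : Prop :=
  ∀ s t, P s → Cmd.Term c s t → Q t

/-- Relational validity `⊨ c|d : {R}{S}`: pairs of terminating executions
from `R`-related stores end in `S`-related stores. -/
def RValid (c d : Cmd V) (R S : (V → Int) → (V → Int) → Prop) : Prop :=
  ∀ s s' t t', R s s' → Cmd.Term c s t → Cmd.Term d s' t' → S t t'

end Sem

section Enc

variable {V : Type} [DecidableEq V]

/-- `c` viewed as a program on the combined variables (undotted part). -/
def embL (c : Cmd V) : Cmd (V ⊕ V) := Cmd.rename Sum.inl c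

/-- `dot d`: `d` with every variable renamed to its dotted copy. -/
def dot (d : Cmd V) : Cmd (V ⊕ V) := Cmd.rename Sum.inr d

end Enc

section Aux

variable {V : Type} [DecidableEq V]

/-- n-step execution. -/
inductive StepsN [DecidableEq V] : ℕ → Cmd V × (V → Int) → Cmd V × (V → Int) → Prop where
  | refl {p} : StepsN 0 p p
  | head {p q r n} : Cmd.Step p q → StepsN n q r → StepsN (n + 1) p r

lemma rtg_iff_stepsN {p q : Cmd V × (V → Int)} :
    Relation.ReflTransGen Cmd.Step p q ↔ ∃ n, StepsN n p q := by
  constructor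
  · intro h
    induction h using Relation.ReflTransGen.head_induction_on with
    | refl => exact ⟨0, .refl⟩
    | head hstep _ ih =>
      obtain ⟨n, hn⟩ := ih
      exact ⟨n + 1, .head hstep hn⟩
  · rintro ⟨n, hn⟩
    induction hn with
    | refl => exact Relation.ReflTransGen.refl
    | head hstep _ ih => exact Relation.ReflTransGen.head hstep ih

lemma term_iff_stepsN {c : Cmd V} {s t : V → Int} :
    Cmd.Term c s t ↔ ∃ n, StepsN n (c, s) (Cmd.skip, t) := rtg_iff_stepsN

lemma skipN {n : ℕ} {s t : V → Int} (h : StepsN n (Cmd.skip, s) (Cmd.skip, t)) : t = s := by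
  cases h with
  | refl => rfl
  | head hstep _ => cases hstep

lemma assignN {n : ℕ} {x : V} {e : (V → Int) → Int} {s t : V → Int}
    (h : StepsN n (Cmd.assign x e, s) (Cmd.skip, t)) :
    t = Function.update s x (e s) := by
  cases h with
  | head hstep hrest => cases hstep; exact skipN hrest

lemma seqN {n : ℕ} {c d : Cmd V} {s t : V → Int}
    (h : StepsN n (Cmd.seq c d, s) (Cmd.skip, t)) :
    ∃ u n₁ n₂, StepsN n₁ (c, s) (Cmd.skip, u) ∧ StepsN n₂ (d, u) (Cmd.skip, t) ∧
      n₁ + n₂ < n := by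
  induction n using Nat.strong_induction_on generalizing c s with
  | _ n ih =>
    cases h with
    | head hstep hrest =>
      cases hstep with
      | seqStep hs =>
        obtain ⟨u, n₁, n₂, h1, h2, hlt⟩ := ih _ (Nat.lt_succ_self _) hrest
        exact ⟨u, n₁ + 1, n₂, .head hs h1, h2, by omega⟩
      | seqSkip =>
        exact ⟨s, 0, _, .refl, hrest, by omega⟩

lemma iteN {n : ℕ} {e : (V → Int) → Int} {c d : Cmd V} {s t : V → Int}
    (h : StepsN n (Cmd.ite e c d, s) (Cmd.skip, t)) :
    (e s ≠ 0 ∧ ∃ m, StepsN m (c, s) (Cmd.skip, t)) ∨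
    (e s = 0 ∧ ∃ m, StepsN m (d, s) (Cmd.skip, t)) := by
  cases h with
  | head hstep hrest =>
    cases hstep with
    | iteT he => exact Or.inl ⟨he, _, hrest⟩
    | iteF he => exact Or.inr ⟨he, _, hrest⟩

lemma whileN {n : ℕ} {e : (V → Int) → Int} {c : Cmd V} {s t : V → Int}
    (h : StepsN n (Cmd.while e c, s) (Cmd.skip, t)) :
    (e s = 0 ∧ t = s) ∨
    (e s ≠ 0 ∧ ∃ u m₁ m₂, StepsN m₁ (c, s) (Cmd.skip, u) ∧
      StepsN m₂ (Cmd.while e c, u) (Cmd.skip, t) ∧ m₂ < n) := by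
  cases h with
  | head hstep hrest =>
    cases hstep with
    | whF he => exact Or.inl ⟨he, skipN hrest⟩
    | whT he =>
      obtain ⟨u, n₁, n₂, h1, h2, hlt⟩ := seqN hrest
      exact Or.inr ⟨he, u, n₁, n₂, h1, h2, by omega⟩

end Aux

section Lockstep

variable {V : Type} [DecidableEq V]

/-- Left test `⟨e⟩`. -/
def ltest (e : (V → Int) → Int) : (V → Int) → (V → Int) → Prop :=
  fun s _ => e s ≠ 0

/-- Right test `⟨e'⟩'`. -/
def rtest (e' : (V → Int) → Int) : (V → Int) → (V → Int) → Prop :=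
  fun _ t => e' t ≠ 0

/-- Agreement on truth value `e ≐ e'`. -/
def agree (e e' : (V → Int) → Int) : (V → Int) → (V → Int) → Prop :=
  fun s t => (e s ≠ 0 ↔ e' t ≠ 0)

lemma dWh_aux (e e' : (V → Int) → Int) (c c' : Cmd V)
    (Q : (V → Int) → (V → Int) → Prop)
    (hag : ∀ s t, Q s t → agree e e' s t)
    (hbody : RValid c c' (fun s t => Q s t ∧ ltest e s t ∧ rtest e' s t) Q)
    (t t' : V → Int) :
    ∀ n₁, ∀ s s' n₂, Q s s' → StepsN n₁ (Cmd.while e c, s) (Cmd.skip, t) →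
      StepsN n₂ (Cmd.while e' c', s') (Cmd.skip, t') →
      Q t t' ∧ ¬ ltest e t t' ∧ ¬ rtest e' t t' := by
  intro n₁
  induction n₁ using Nat.strong_induction_on with
  | _ n₁ ih =>
    intro s s' n₂ hQ h1 h2
    have hagree := hag s s' hQ
    rcases whileN h1 with ⟨he, hts⟩ | ⟨he, u, m1, m2, hc, hw, hlt⟩
    · rcases whileN h2 with ⟨he', hts'⟩ | ⟨he', _, _, _, _, _, _⟩
      · subst hts; subst hts'
        exact ⟨hQ, by simpa [ltest] using he, by simpa [rtest] using he'⟩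
      · exact absurd (hagree.mpr he') (by simpa using he)
    · rcases whileN h2 with ⟨he', _⟩ | ⟨he', u', m1', m2', hc', hw', hlt'⟩
      · exact absurd (hagree.mp he) (by simpa using he')
      · have hQu : Q u u' := hbody s s' u u' ⟨hQ, he, he'⟩
          (term_iff_stepsN.mpr ⟨_, hc⟩) (term_iff_stepsN.mpr ⟨_, hc'⟩)
        exact ih m2 hlt u u' _ hQu hw hw'

/-- **Soundness of the lockstep (diagonal) relational rules.** -/
theorem lockstep_rules_sound :
    -- dAss
    (∀ (x x' : V) (e e' : (V → Int) → Int)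
        (R : (V → Int) → (V → Int) → Prop),
      RValid (Cmd.assign x e) (Cmd.assign x' e') (rsubst R x x' e e') R) ∧
    -- dSeq
    (∀ (c c' d d' : Cmd V) (R Q S : (V → Int) → (V → Int) → Prop),
      RValid c c' R Q → RValid d d' Q S →
      RValid (Cmd.seq c d) (Cmd.seq c' d') R S) ∧
    -- dIf
    (∀ (e e' : (V → Int) → Int) (c c' d d' : Cmd V)
        (R S : (V → Int) → (V → Int) → Prop),
      (∀ s t, R s t → agree e e' s t) →
      RValid c c' (fun s t => R s t ∧ ltest e s t ∧ rtest e' s t) S →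
      RValid d d' (fun s t => R s t ∧ ¬ ltest e s t ∧ ¬ rtest e' s t) S →
      RValid (Cmd.ite e c d) (Cmd.ite e' c' d') R S) ∧
    -- dWh
    (∀ (e e' : (V → Int) → Int) (c c' : Cmd V)
        (Q : (V → Int) → (V → Int) → Prop),
      (∀ s t, Q s t → agree e e' s t) →
      RValid c c' (fun s t => Q s t ∧ ltest e s t ∧ rtest e' s t) Q →
      RValid (Cmd.while e c) (Cmd.while e' c')
        Q (fun s t => Q s t ∧ ¬ ltest e s t ∧ ¬ rtest e' s t)) ∧
    -- rConseq
    (∀ (c d : Cmd V) (P R S Q : (V → Int) → (V → Int) → Prop),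
      (∀ s t, P s t → R s t) → RValid c d R S → (∀ s t, S s t → Q s t) →
      RValid c d P Q) := by
  refine ⟨?_, ?_, ?_, ?_, ?_⟩
  · -- dAss
    intro x x' e e' R s s' t t' hR h1 h2
    obtain ⟨n1, h1⟩ := term_iff_stepsN.mp h1
    obtain ⟨n2, h2⟩ := term_iff_stepsN.mp h2
    rw [assignN h1, assignN h2]
    exact hR
  · -- dSeq
    intro c c' d d' R Q S hcc hdd s s' t t' hR h1 h2
    obtain ⟨n1, h1⟩ := term_iff_stepsN.mp h1
    obtain ⟨n2, h2⟩ := term_iff_stepsN.mp h2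
    obtain ⟨u, m1, m2, hc, hd, -⟩ := seqN h1
    obtain ⟨u', m1', m2', hc', hd', -⟩ := seqN h2
    exact hdd u u' t t'
      (hcc s s' u u' hR (term_iff_stepsN.mpr ⟨_, hc⟩) (term_iff_stepsN.mpr ⟨_, hc'⟩))
      (term_iff_stepsN.mpr ⟨_, hd⟩) (term_iff_stepsN.mpr ⟨_, hd'⟩)
  · -- dIf
    intro e e' c c' d d' R S hag hT hF s s' t t' hR h1 h2
    obtain ⟨n1, h1⟩ := term_iff_stepsN.mp h1
    obtain ⟨n2, h2⟩ := term_iff_stepsN.mp h2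
    have hagree := hag s s' hR
    rcases iteN h1 with ⟨he, m, hm⟩ | ⟨he, m, hm⟩ <;>
      rcases iteN h2 with ⟨he', m', hm'⟩ | ⟨he', m', hm'⟩
    · exact hT s s' t t' ⟨hR, he, he'⟩ (term_iff_stepsN.mpr ⟨_, hm⟩)
        (term_iff_stepsN.mpr ⟨_, hm'⟩)
    · exact absurd (hagree.mp he) (by simpa using he')
    · exact absurd (hagree.mpr he') (by simpa using he)
    · exact hF s s' t t' ⟨hR, by simpa [ltest] using he, by simpa [rtest] using he'⟩
        (term_iff_stepsN.mpr ⟨_, hm⟩) (term_iff_stepsN.mpr ⟨_, hm'⟩)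
  · -- dWh
    intro e e' c c' Q hag hbody s s' t t' hQ h1 h2
    obtain ⟨n1, h1⟩ := term_iff_stepsN.mp h1
    obtain ⟨n2, h2⟩ := term_iff_stepsN.mp h2
    exact dWh_aux e e' c c' Q hag hbody t t' n1 s s' n2 hQ h1 h2
  · -- rConseq
    intro c d P R S Q hPR hRS hSQ s s' t t' hP h1 h2
    exact hSQ _ _ (hRS s s' t t' (hPR _ _ hP) h1 h2)

end Lockstep
end

section
/- Soundness of the conditionally-aligned while rule (caWhile): if (1) c|c' : {Q ∧ ⟨e⟩ ∧ ⟨e'⟩' ∧ ¬L ∧ ¬R} {Q} is valid, (2) c|skip : {Q ∧ L ∧ ⟨e⟩} {Q} is valid, (3) skip|c' : {Q ∧ R ∧ ⟨e'⟩'} {Q} is valid, and (4) Q implies (e ≐ e') ∨ (L ∧ ⟨e⟩) ∨ (R ∧ ⟨e'⟩'), then while e do c | while e' do c' : {Q}{Q ∧ ¬⟨e⟩ ∧ ¬⟨e'⟩'} is valid. -/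
section CaWhile

variable {V : Type} [DecidableEq V]

/-- Step-counted execution. -/
inductive StepN : ℕ → Cmd V × (V → Int) → Cmd V × (V → Int) → Prop where
  | refl (p) : StepN 0 p p
  | head {n p q r} : Cmd.Step p q → StepN n q r → StepN (n+1) p r

lemma StepN.tail {n : ℕ} {p q r : Cmd V × (V → Int)}
    (h : StepN n p q) (hs : Cmd.Step q r) : StepN (n+1) p r := by
  induction h with
  | refl p => exact StepN.head hs (StepN.refl _)
  | head h1 h2 ih => exact StepN.head h1 (ih hs)

lemma rtg_to_stepN {p q : Cmd V × (V → Int)}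
    (h : Relation.ReflTransGen Cmd.Step p q) : ∃ n, StepN n p q := by
  induction h with
  | refl => exact ⟨0, StepN.refl _⟩
  | tail _ hs ih => obtain ⟨n, hn⟩ := ih; exact ⟨n+1, hn.tail hs⟩

lemma term_to_stepN {c : Cmd V} {s t : V → Int} (h : Cmd.Term c s t) :
    ∃ n, StepN n (c, s) (Cmd.skip, t) := rtg_to_stepN h

lemma stepN_to_rtg {n : ℕ} {p q : Cmd V × (V → Int)} (h : StepN n p q) :
    Relation.ReflTransGen Cmd.Step p q := by
  induction h with
  | refl p => exact Relation.ReflTransGen.refl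
  | head h1 _ ih => exact Relation.ReflTransGen.head h1 ih

lemma stepN_to_term {n : ℕ} {c : Cmd V} {s t : V → Int}
    (h : StepN n (c, s) (Cmd.skip, t)) : Cmd.Term c s t := stepN_to_rtg h

lemma skipN_inv {n : ℕ} {s t : V → Int}
    (h : StepN n (Cmd.skip, s) (Cmd.skip, t)) : t = s := by
  cases h with
  | refl => rfl
  | head hs _ => cases hs

lemma seqN_inv : ∀ {n : ℕ} {p q : Cmd V × (V → Int)},
    StepN n p q →
    ∀ c d s t, p = (Cmd.seq c d, s) → q = (Cmd.skip, t) →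
    ∃ n₁ n₂ m, n₁ + n₂ < n ∧ StepN n₁ (c, s) (Cmd.skip, m) ∧
      StepN n₂ (d, m) (Cmd.skip, t) := by
  intro n p q h
  induction h with
  | refl p => intro c d s t hp hq; simp_all
  | head hstep hrest ih =>
    intro c d s t hp hq
    subst hp; subst hq
    cases hstep with
    | seqStep hs =>
      obtain ⟨n₁, n₂, m, hlt, h1, h2⟩ := ih _ _ _ _ rfl rfl
      exact ⟨n₁+1, n₂, m, by omega, StepN.head hs h1, h2⟩
    | seqSkip =>
      exact ⟨0, _, s, by omega, StepN.refl _, hrest⟩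

lemma whileN_inv {n : ℕ} {e : (V → Int) → Int} {c : Cmd V} {s t : V → Int}
    (h : StepN n (Cmd.while e c, s) (Cmd.skip, t)) :
    (e s = 0 ∧ t = s) ∨
    (e s ≠ 0 ∧ ∃ n₁ n₂ m, n₁ + n₂ < n ∧ StepN n₁ (c, s) (Cmd.skip, m) ∧
      StepN n₂ (Cmd.while e c, m) (Cmd.skip, t)) := by
  cases h with
  | head hstep hrest =>
    cases hstep with
    | whT he =>
      obtain ⟨n₁, n₂, m, hlt, h1, h2⟩ := seqN_inv hrest _ _ _ _ rfl rfl
      exact Or.inr ⟨he, n₁, n₂, m, by omega, h1, h2⟩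
    | whF he => exact Or.inl ⟨he, skipN_inv hrest⟩

/-- **Soundness of the conditionally-aligned while rule (caWhile)**. -/
theorem caWhile_sound (e e' : (V → Int) → Int) (c c' : Cmd V)
    (Q L R : (V → Int) → (V → Int) → Prop)
    (h1 : RValid c c'
      (fun s t => Q s t ∧ ltest e s t ∧ rtest e' s t ∧ ¬ L s t ∧ ¬ R s t) Q)
    (h2 : RValid c Cmd.skip (fun s t => Q s t ∧ L s t ∧ ltest e s t) Q)
    (h3 : RValid Cmd.skip c' (fun s t => Q s t ∧ R s t ∧ rtest e' s t) Q)
    (h4 : ∀ s t, Q s t →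
      agree e e' s t ∨ (L s t ∧ ltest e s t) ∨ (R s t ∧ rtest e' s t)) :
    RValid (Cmd.while e c) (Cmd.while e' c')
      Q (fun s t => Q s t ∧ ¬ ltest e s t ∧ ¬ rtest e' s t) := by
  have key : ∀ N n n' (s s' t t' : V → Int), n + n' ≤ N → Q s s' →
      StepN n (Cmd.while e c, s) (Cmd.skip, t) →
      StepN n' (Cmd.while e' c', s') (Cmd.skip, t') →
      Q t t' ∧ ¬ ltest e t t' ∧ ¬ rtest e' t t' := by
    intro N
    induction N using Nat.strong_induction_on with
    | _ N IH =>
      intro n n' s s' t t' hle hQ hl hr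
      rcases whileN_inv hl with ⟨he, ht⟩ | ⟨he, n₁, n₂, m, hlt, hc, hw⟩
      · rcases whileN_inv hr with ⟨he', ht'⟩ | ⟨he', n₁', n₂', m', hlt', hc', hw'⟩
        · subst ht; subst ht'
          exact ⟨hQ, fun h => h he, fun h => h he'⟩
        · -- left exits, right iterates: must be in the R case
          rcases h4 s s' hQ with hag | ⟨_, hte⟩ | ⟨hR, hte'⟩
          · exact absurd he (hag.mpr he')
          · exact absurd he hte
          · have hQ' : Q s m' :=
              h3 s s' s m' ⟨hQ, hR, hte'⟩ Relation.ReflTransGen.refl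
                (stepN_to_term hc')
            exact IH (n + n₂') (by omega) n n₂' s m' t t' le_rfl hQ' hl hw'
      · rcases whileN_inv hr with ⟨he', ht'⟩ | ⟨he', n₁', n₂', m', hlt', hc', hw'⟩
        · -- right exits, left iterates: must be in the L case
          rcases h4 s s' hQ with hag | ⟨hL, hte⟩ | ⟨_, hte'⟩
          · exact absurd he' (hag.mp he)
          · have hQ' : Q m s' :=
              h2 s s' m s' ⟨hQ, hL, hte⟩ (stepN_to_term hc)
                Relation.ReflTransGen.refl
            exact IH (n₂ + n') (by omega) n₂ n' m s' t t' le_rfl hQ' hw hr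
          · exact absurd he' hte'
        · -- both iterate
          by_cases hL : L s s'
          · have hQ' : Q m s' :=
              h2 s s' m s' ⟨hQ, hL, he⟩ (stepN_to_term hc)
                Relation.ReflTransGen.refl
            exact IH (n₂ + n') (by omega) n₂ n' m s' t t' le_rfl hQ' hw hr
          · by_cases hR : R s s'
            · have hQ' : Q s m' :=
                h3 s s' s m' ⟨hQ, hR, he'⟩ Relation.ReflTransGen.refl
                  (stepN_to_term hc')
              exact IH (n + n₂') (by omega) n n₂' s m' t t' le_rfl hQ' hl hw'
            · have hQ' : Q m m' :=
                h1 s s' m m' ⟨hQ, he, he', hL, hR⟩ (stepN_to_term hc)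
                  (stepN_to_term hc')
              exact IH (n₂ + n₂') (by omega) n₂ n₂' m m' t t' le_rfl hQ' hw hw'
  intro s s' t t' hQ hl hr
  obtain ⟨n, hn⟩ := term_to_stepN hl
  obtain ⟨n', hn'⟩ := term_to_stepN hr
  exact key (n + n') n n' s s' t t' le_rfl hQ hn hn'

end CaWhile
end

section
/- Soundness of the one-side rules: (AssSkip) x:=e | skip : {R[x|↦e|]}{R} is valid; (SeqSkip) if c|skip : {R}{Q} and d|skip : {Q}{S} are valid then c;d | skip : {R}{S} is valid; (IfSkip) if c|skip : {R ∧ ⟨e⟩}{S} and d|skip : {R ∧ ⟨¬e⟩}{S} are valid then (if e then c else d) | skip : {R}{S} is valid; (WhSkip) if c|skip : {Q ∧ ⟨e⟩}{Q} is valid then (while e do c) | skip : {Q}{Q ∧ ⟨¬e⟩} is valid. -/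
section OneSide

variable {V : Type} [DecidableEq V]

/-- One-sided relational substitution `R[x| ↦ e|]`. -/
def lsubst (R : (V → Int) → (V → Int) → Prop) (x : V)
    (e : (V → Int) → Int) : (V → Int) → (V → Int) → Prop :=
  fun s s' => R (Function.update s x (e s)) s'

lemma term_skip_eq {s t : V → Int} (h : Cmd.Term (Cmd.skip : Cmd V) s t) : s = t := by
  rcases h.cases_head with h | ⟨⟨c, u⟩, hstep, _⟩
  · exact congrArg Prod.snd h
  · cases hstep

lemma term_assign {x : V} {e : (V → Int) → Int} {s t : V → Int}
    (h : Cmd.Term (Cmd.assign x e) s t) : t = Function.update s x (e s) := by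
  rcases h.cases_head with h | ⟨⟨c, u⟩, hstep, hrest⟩
  · exact absurd (congrArg Prod.fst h) (by simp)
  · cases hstep
    exact (term_skip_eq hrest).symm

lemma term_seq_inv {c d : Cmd V} {s t : V → Int}
    (h : Cmd.Term (Cmd.seq c d) s t) :
    ∃ u, Cmd.Term c s u ∧ Cmd.Term d u t := by
  suffices H : ∀ p : Cmd V × (V → Int), Relation.ReflTransGen Cmd.Step p (Cmd.skip, t) →
      ∀ c d s, p = (Cmd.seq c d, s) → ∃ u, Cmd.Term c s u ∧ Cmd.Term d u t from
    H _ h c d s rfl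
  intro p hp
  induction hp using Relation.ReflTransGen.head_induction_on with
  | refl => intro c d s h; exact absurd (congrArg Prod.fst h) (by simp)
  | head hstep _ ih =>
    intro c d s h
    subst h
    cases hstep with
    | seqStep h1 =>
      obtain ⟨u, hu1, hu2⟩ := ih _ _ _ rfl
      exact ⟨u, Relation.ReflTransGen.head h1 hu1, hu2⟩
    | seqSkip =>
      exact ⟨s, Relation.ReflTransGen.refl, by assumption⟩

lemma term_ite_inv {e : (V → Int) → Int} {c d : Cmd V} {s t : V → Int}
    (h : Cmd.Term (Cmd.ite e c d) s t) :
    (e s ≠ 0 ∧ Cmd.Term c s t) ∨ (e s = 0 ∧ Cmd.Term d s t) := by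
  rcases h.cases_head with h | ⟨⟨c', u⟩, hstep, hrest⟩
  · exact absurd (congrArg Prod.fst h) (by simp)
  · cases hstep with
    | iteT he => exact Or.inl ⟨he, hrest⟩
    | iteF he => exact Or.inr ⟨he, hrest⟩

lemma term_while_inv {e : (V → Int) → Int} {c : Cmd V}
    {Q : (V → Int) → (V → Int) → Prop} {s' : V → Int}
    (H : ∀ s u, Q s s' → e s ≠ 0 → Cmd.Term c s u → Q u s')
    {s t : V → Int} (h : Cmd.Term (Cmd.while e c) s t) (hQ : Q s s') :
    Q t s' ∧ e t = 0 := by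
  suffices Hn : ∀ p : Cmd V × (V → Int), Relation.ReflTransGen Cmd.Step p (Cmd.skip, t) →
      (∀ s, p = (Cmd.while e c, s) → Q s s' → Q t s' ∧ e t = 0) ∧
      (∀ c0 s, p = (Cmd.seq c0 (Cmd.while e c), s) →
        (∀ u, Cmd.Term c0 s u → Q u s') → Q t s' ∧ e t = 0) from
    (Hn _ h).1 s rfl hQ
  intro p hp
  induction hp using Relation.ReflTransGen.head_induction_on with
  | refl =>
    constructor
    · intro s h; exact absurd (congrArg Prod.fst h) (by simp)
    · intro c0 s h; exact absurd (congrArg Prod.fst h) (by simp)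
  | head hstep hrest ih =>
    constructor
    · intro s h hQs
      subst h
      cases hstep with
      | whT he =>
        exact ih.2 c s rfl (fun u hu => H s u hQs he hu)
      | whF he =>
        have := term_skip_eq hrest
        subst this
        exact ⟨hQs, he⟩
    · intro c0 s h hc0
      subst h
      cases hstep with
      | seqStep h1 =>
        exact ih.2 _ _ rfl (fun u hu => hc0 u (Relation.ReflTransGen.head h1 hu))
      | seqSkip =>
        exact ih.1 s rfl (hc0 s Relation.ReflTransGen.refl)

/-- **Soundness of the one-side rules** (left-side versions). -/
theorem oneSide_rules_sound :
    -- AssSkip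
    (∀ (x : V) (e : (V → Int) → Int) (R : (V → Int) → (V → Int) → Prop),
      RValid (Cmd.assign x e) Cmd.skip (lsubst R x e) R) ∧
    -- SeqSkip
    (∀ (c d : Cmd V) (R Q S : (V → Int) → (V → Int) → Prop),
      RValid c Cmd.skip R Q → RValid d Cmd.skip Q S →
      RValid (Cmd.seq c d) Cmd.skip R S) ∧
    -- IfSkip
    (∀ (e : (V → Int) → Int) (c d : Cmd V)
        (R S : (V → Int) → (V → Int) → Prop),
      RValid c Cmd.skip (fun s s' => R s s' ∧ ltest e s s') S →
      RValid d Cmd.skip (fun s s' => R s s' ∧ ¬ ltest e s s') S →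
      RValid (Cmd.ite e c d) Cmd.skip R S) ∧
    -- WhSkip
    (∀ (e : (V → Int) → Int) (c : Cmd V) (Q : (V → Int) → (V → Int) → Prop),
      RValid c Cmd.skip (fun s s' => Q s s' ∧ ltest e s s') Q →
      RValid (Cmd.while e c) Cmd.skip
        Q (fun s s' => Q s s' ∧ ¬ ltest e s s')) := by
  refine ⟨?_, ?_, ?_, ?_⟩
  · intro x e R s s' t t' hR hc hd
    rw [← term_skip_eq hd, term_assign hc]
    exact hR
  · intro c d R Q S hc hd s s' t t' hR hcd hsk
    have hs' := term_skip_eq hsk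
    subst hs'
    obtain ⟨u, hu1, hu2⟩ := term_seq_inv hcd
    exact hd u s' t s' (hc s s' u s' hR hu1 Relation.ReflTransGen.refl) hu2
      Relation.ReflTransGen.refl
  · intro e c d R S hc hd s s' t t' hR hite hsk
    have hs' := term_skip_eq hsk
    subst hs'
    rcases term_ite_inv hite with ⟨he, h⟩ | ⟨he, h⟩
    · exact hc s s' t s' ⟨hR, he⟩ h Relation.ReflTransGen.refl
    · exact hd s s' t s' ⟨hR, fun hne => hne he⟩ h Relation.ReflTransGen.refl
  · intro e c Q hc s s' t t' hQ hw hsk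
    have hs' := term_skip_eq hsk
    subst hs'
    have := term_while_inv
      (fun s u hq hne hu => hc s s' u s' ⟨hq, hne⟩ hu Relation.ReflTransGen.refl)
      hw hQ
    exact ⟨this.1, fun hne => hne this.2⟩

end OneSide
end
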